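/- arXiv:2110.11793 — 3 statements merged into one kernel-verified Lean document; each statement's English description precedes it below -/
import Mathlib

section
/- A point x̄ ∈ ℝⁿ with ‖x̄‖₀ ≤ s is a local minimizer of the sparsity constrained problem min f(x) s.t. ‖x‖₀ ≤ s only if ∂f/∂xᵢ(x̄) = 0 for all i with x̄ᵢ ≠ 0; that is, every local minimizer of SCNO is M-stationary. -/
/-! If `x̄ᵢ ≠ 0`, moving along the `i`-th coordinate axis never enlarges the support, so the whole
line `x̄ + t eᵢ` is feasible. Fermat's rule in the directions `±eᵢ`, both tangent to the feasible
set, then gives `∂f/∂xᵢ(x̄) = 0`. -/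

open Function Set

theorem Function.support_add_smul_single_subset {ι R M : Type*} [DecidableEq ι] [AddZeroClass M]
    [SMulZeroClass R M] {x : ι → M} {i : ι} (hi : x i ≠ 0) (c : R) (y : M) :
    support (x + c • (Pi.single i y : ι → M)) ⊆ support x := by
  intro j hj
  by_cases hji : j = i
  · exact hji ▸ hi
  · simpa [Pi.single_eq_of_ne hji] using hj

section Fermat

variable {E : Type*} [NormedAddCommGroup E] [NormedSpace ℝ E] {f : E → ℝ} {f' : StrongDual ℝ E}
  {s : Set E} {a y : E}

theorem mem_posTangentConeAt_of_forall_add_smul_mem (h : ∀ t : ℝ, a + t • y ∈ s) :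
    y ∈ posTangentConeAt s a :=
  mem_posTangentConeAt_of_segment_subset <| by
    rw [segment_eq_image']
    rintro _ ⟨t, -, rfl⟩
    simpa using h t

theorem IsLocalMinOn.hasFDerivAt_eq_zero_of_forall_add_smul_mem (h : IsLocalMinOn f s a)
    (hf : HasFDerivAt f f' a) (hline : ∀ t : ℝ, a + t • y ∈ s) : f' y = 0 :=
  h.hasFDerivWithinAt_eq_zero hf.hasFDerivWithinAt
    (mem_posTangentConeAt_of_forall_add_smul_mem hline)
    (mem_posTangentConeAt_of_forall_add_smul_mem fun t => by simpa using hline (-t))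

end Fermat

theorem scno_local_min_is_M_stationary_general (n s : ℕ)
    (f : (Fin n → ℝ) → ℝ) (hf : ContDiff ℝ 2 f)
    (xbar : Fin n → ℝ)
    (hfeas : Set.ncard {i : Fin n | xbar i ≠ 0} ≤ s)
    (hmin : IsLocalMinOn f {x : Fin n → ℝ | Set.ncard {i : Fin n | x i ≠ 0} ≤ s} xbar) :
    ∀ i : Fin n, xbar i ≠ 0 → fderiv ℝ f xbar (Pi.single i 1) = 0 := by
  intro i hi
  have hline (t : ℝ) : xbar + t • Pi.single i 1 ∈ {x : Fin n → ℝ | ncard {j | x j ≠ 0} ≤ s} :=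
    (ncard_le_ncard (support_add_smul_single_subset hi t 1) (toFinite _)).trans hfeas
  exact hmin.hasFDerivAt_eq_zero_of_forall_add_smul_mem
    (hf.differentiable two_ne_zero xbar).hasFDerivAt hline

/-- Every local minimizer of SCNO is M-stationary. -/
theorem scno_local_min_is_M_stationary (n s : ℕ) (hs : s < n)
    (f : (Fin n → ℝ) → ℝ) (hf : ContDiff ℝ 2 f)
    (xbar : Fin n → ℝ)
    (hfeas : Set.ncard {i : Fin n | xbar i ≠ 0} ≤ s)
    (hmin : IsLocalMinOn f {x : Fin n → ℝ | Set.ncard {i : Fin n | x i ≠ 0} ≤ s} xbar) :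
    ∀ i : Fin n, xbar i ≠ 0 → fderiv ℝ f xbar (Pi.single i 1) = 0 :=
  scno_local_min_is_M_stationary_general n s f hf xbar hfeas hmin
end

section
/- A point x̄ ∈ ℝⁿ is feasible for SCNO (i.e. ‖x̄‖₀ ≤ s) if and only if there exists ȳ ∈ [0,1]ⁿ with ∑ᵢ ȳᵢ ≥ n − s and x̄ᵢ·ȳᵢ = 0 for all i = 1,…,n. -/
open Finset

section
variable {ι : Type*} [Fintype ι]

theorem sum_le_card_filter_eq_zero_of_mul_eq_zero {x y : ι → ℝ} (hy : ∀ i, y i ≤ 1)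
    (hxy : ∀ i, x i * y i = 0) : ∑ i, y i ≤ #{i | x i = 0} := by
  have hsupp : ∀ i ∈ univ, y i ≠ 0 → x i = 0 := fun i _ hyi =>
    (mul_eq_zero.mp (hxy i)).resolve_right hyi
  calc ∑ i, y i = ∑ i with x i = 0, y i := (sum_filter_of_ne hsupp).symm
    _ ≤ ∑ i with x i = 0, 1 := sum_le_sum fun i _ => hy i
    _ = #{i | x i = 0} := by simp

theorem exists_mem_Icc_sum_ge_mul_eq_zero_iff (x : ι → ℝ) (t : ℝ) :
    (∃ y : ι → ℝ, (∀ i, y i ∈ Set.Icc (0 : ℝ) 1) ∧ t ≤ ∑ i, y i ∧ ∀ i, x i * y i = 0) ↔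
      t ≤ #{i | x i = 0} := by
  constructor
  · rintro ⟨y, hy, hty, hxy⟩
    exact hty.trans (sum_le_card_filter_eq_zero_of_mul_eq_zero (fun i => (hy i).2) hxy)
  · intro ht
    refine ⟨fun i => if x i = 0 then 1 else 0, fun i => ?_, by simpa [sum_boole] using ht,
      fun i => ?_⟩ <;> by_cases h : x i = 0 <;> simp [h]

theorem ncard_setOf_ne_zero_add_card_filter_eq_zero {M : Type*} [Zero M] [DecidableEq M]
    (x : ι → M) :
    Set.ncard {i | x i ≠ 0} + #{i | x i = 0} = Fintype.card ι := by
  rw [← coe_filter_univ, Set.ncard_coe_finset, add_comm]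
  exact card_filter_add_card_filter_not _

end

theorem scno_feasible_iff_relaxation_general (n s : ℕ)
    (xbar : Fin n → ℝ) :
    Set.ncard {i : Fin n | xbar i ≠ 0} ≤ s ↔
      ∃ ybar : Fin n → ℝ,
        (∀ i, ybar i ∈ Set.Icc (0 : ℝ) 1) ∧
        (n : ℝ) - (s : ℝ) ≤ ∑ i, ybar i ∧
        ∀ i, xbar i * ybar i = 0 := by
  rw [exists_mem_Icc_sum_ge_mul_eq_zero_iff]
  have hsplit : (Set.ncard {i | xbar i ≠ 0} : ℝ) + #{i | xbar i = 0} = n := by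
    exact_mod_cast (ncard_setOf_ne_zero_add_card_filter_eq_zero xbar).trans (Fintype.card_fin n)
  rw [← Nat.cast_le (α := ℝ)]
  constructor <;> intro h <;> linarith

/-- SCNO feasibility is equivalent to existence of an auxiliary vector `y`
for the relaxed constraints. -/
theorem scno_feasible_iff_relaxation (n s : ℕ) (hs : s < n)
    (xbar : Fin n → ℝ) :
    Set.ncard {i : Fin n | xbar i ≠ 0} ≤ s ↔
      ∃ ybar : Fin n → ℝ,
        (∀ i, ybar i ∈ Set.Icc (0 : ℝ) 1) ∧
        (n : ℝ) - (s : ℝ) ≤ ∑ i, ybar i ∧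
        ∀ i, xbar i * ybar i = 0 :=
  scno_feasible_iff_relaxation_general n s xbar
end

section
/- A feasible point (x̄, ȳ) of the relaxation of SCNO is T-stationary if and only if x̄ is M-stationary for SCNO, i.e. ∂f/∂xᵢ(x̄) = 0 for all i with x̄ᵢ ≠ 0. -/
open Classical

/-- Feasibility for the relaxation of SCNO. -/
def RelaxFeasible (n s : ℕ) (x y : Fin n → ℝ) : Prop :=
  (∀ i, y i ∈ Set.Icc (0 : ℝ) 1) ∧
  (n : ℝ) - (s : ℝ) ≤ ∑ i, y i ∧
  ∀ i, x i * y i = 0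

/-- T-stationarity for the relaxation of SCNO, stated coordinatewise:
the x-components and y-components of the Lagrangian equation
(Df(x̄),0) = μ̄(0,e) − ∑_{I₀₁} μ̄ᵢ(0,eᵢ) + ∑_{I₀≠} σ̄₁,ᵢ(eᵢ,0)
+ ∑_{I₁} σ̄₂,ᵢ(0,eᵢ) + ∑_{I₀₀}(ϱ̄₁,ᵢ(eᵢ,0)+ϱ̄₂,ᵢ(0,eᵢ)),
together with sign and complementarity conditions. -/
def TStationary (n s : ℕ) (f : (Fin n → ℝ) → ℝ) (x y : Fin n → ℝ) : Prop :=
  ∃ (μ : ℝ) (μI σ₁ σ₂ ϱ₁ ϱ₂ : Fin n → ℝ),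
    0 ≤ μ ∧
    (∀ i, x i = 0 ∧ y i = 1 → 0 ≤ μI i) ∧
    (∀ i, fderiv ℝ f x (Pi.single i 1) =
        (if x i = 0 ∧ y i ≠ 0 then σ₁ i else 0) +
        (if x i = 0 ∧ y i = 0 then ϱ₁ i else 0)) ∧
    (∀ i, (0 : ℝ) = μ - (if x i = 0 ∧ y i = 1 then μI i else 0) +
        (if x i ≠ 0 then σ₂ i else 0) +
        (if x i = 0 ∧ y i = 0 then ϱ₂ i else 0)) ∧
    μ * ((∑ i, if x i = 0 then y i else 0) - ((n : ℝ) - (s : ℝ))) = 0 ∧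
    (∀ i, x i = 0 ∧ y i = 0 → (ϱ₁ i = 0 ∨ ϱ₂ i ≤ 0))

/-! The x-part of the Lagrange equation carries a multiplier only at indices with `x i = 0`,
so at indices with `x i ≠ 0` T-stationarity forces `∂ᵢ f = 0`. Conversely, with `μ = 0` and all
y-multipliers zero, the x-multipliers `σ₁`, `ϱ₁` can simply absorb the gradient on `{x i = 0}`;
the sign condition on `I₀₀` holds because `ϱ₂ = 0`. -/

theorem fderiv_single_eq_zero_of_tStationary {n s : ℕ} {f : (Fin n → ℝ) → ℝ} {x y : Fin n → ℝ}
    (hT : TStationary n s f x y) (i : Fin n) (hi : x i ≠ 0) :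
    fderiv ℝ f x (Pi.single i 1) = 0 := by
  obtain ⟨_, _, _, _, _, _, _, _, hgrad, _⟩ := hT
  simpa [hi] using hgrad i

theorem tStationary_of_fderiv_single_eq_zero {n s : ℕ} {f : (Fin n → ℝ) → ℝ} {x y : Fin n → ℝ}
    (hM : ∀ i, x i ≠ 0 → fderiv ℝ f x (Pi.single i 1) = 0) :
    TStationary n s f x y := by
  set g : Fin n → ℝ := fun i => fderiv ℝ f x (Pi.single i 1)
  refine ⟨0, 0, g, 0, g, 0, le_rfl, fun _ _ => le_rfl, fun i => ?_, fun i => by simp,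
    by simp, fun _ _ => Or.inr le_rfl⟩
  by_cases hx : x i = 0
  · by_cases hy : y i = 0 <;> simp [g, hx, hy]
  · simp [g, hx, hM i hx]

theorem tStationary_iff_mStationary_general (n s : ℕ)
    (f : (Fin n → ℝ) → ℝ)
    (xbar ybar : Fin n → ℝ) :
    TStationary n s f xbar ybar ↔
      ∀ i : Fin n, xbar i ≠ 0 → fderiv ℝ f xbar (Pi.single i 1) = 0 :=
  ⟨fderiv_single_eq_zero_of_tStationary, tStationary_of_fderiv_single_eq_zero⟩

/-- A feasible point of the relaxation is T-stationary iff the x-part is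
M-stationary for SCNO. -/
theorem tStationary_iff_mStationary (n s : ℕ) (hs : s < n)
    (f : (Fin n → ℝ) → ℝ) (hf : ContDiff ℝ 2 f)
    (xbar ybar : Fin n → ℝ) (hfeas : RelaxFeasible n s xbar ybar) :
    TStationary n s f xbar ybar ↔
      ∀ i : Fin n, xbar i ≠ 0 → fderiv ℝ f xbar (Pi.single i 1) = 0 :=
  tStationary_iff_mStationary_general n s f xbar ybar
end
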